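/- arXiv:2011.06223 — 2 statements merged into one kernel-verified Lean document; each statement's English description precedes it below -/
import Mathlib

section
/- Fix parameters α > 0, μ > 0, τ > 0, p ∈ [0,1), and a real t > 0. For each integer ν ≥ 2 with μ(t − τν) > 0, on the open interval I_ν = (max(0, μ(t − τ(ν+1))), μ(t − τν)) the expected-return function E(ℓ) = Σ_{ν'=2}^{∞} h_{ν'} · max(0, f_{ν'}(t; ℓ)) coincides with the finite sum Σ_{ν'=2}^{ν} h_{ν'} f_{ν'}(t; ℓ) and is strictly concave on I_ν; hence E is piece-wise concave in ℓ with intervals of concavity delimited by the points μ(t − τν). -/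
/-!
For `ℓ > 0` one has `f_ν(t; ℓ) = ℓ - ℓ exp(α - αμ(t - τν)/ℓ)`, and `f_ν(t; ℓ)` has the sign of
`μ(t - τν) - ℓ`. On `I_ν` the positive parts therefore keep exactly the terms `ν' ≤ ν`, each of
which is strictly concave because `ℓ ↦ ℓ exp(a - c/ℓ)` has second derivative
`c² exp(a - c/ℓ) / ℓ³ > 0`. The weights are nonnegative and `h_2 = (1 - p)² > 0`, so the finite sum
is strictly concave.
-/

open Real Set

theorem hasDerivAt_mul_exp_sub_div (a c : ℝ) {x : ℝ} (hx : x ≠ 0) :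
    HasDerivAt (fun y => y * exp (a - c / y)) (exp (a - c / x) * (1 + c / x)) x := by
  have := (hasDerivAt_id' x).fun_mul (((hasDerivAt_inv hx).const_mul c).const_sub a).exp
  simp only [← div_eq_mul_inv] at this
  exact this.congr_deriv (by field_simp)

theorem hasDerivAt_exp_sub_div_mul_one_add_div (a c : ℝ) {x : ℝ} (hx : x ≠ 0) :
    HasDerivAt (fun y => exp (a - c / y) * (1 + c / y)) (exp (a - c / x) * (c ^ 2 / x ^ 3)) x := by
  have := (((hasDerivAt_inv hx).const_mul c).const_sub a).exp.fun_mul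
    (((hasDerivAt_inv hx).const_mul c).const_add 1)
  simp only [← div_eq_mul_inv] at this
  exact this.congr_deriv (by field_simp; ring)

theorem strictConvexOn_mul_exp_sub_div (a : ℝ) {c : ℝ} (hc : c ≠ 0) :
    StrictConvexOn ℝ (Ioi 0) fun x => x * exp (a - c / x) := by
  refine strictConvexOn_of_deriv2_pos (convex_Ioi 0)
    (fun x hx => (hasDerivAt_mul_exp_sub_div a c (ne_of_gt hx)).continuousAt.continuousWithinAt)
    fun x hx => ?_
  rw [interior_Ioi] at hx
  have hderiv : deriv (fun y => y * exp (a - c / y)) =ᶠ[nhds x]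
      fun y => exp (a - c / y) * (1 + c / y) :=
    Filter.eventually_of_mem (Ioi_mem_nhds hx) fun y hy =>
      (hasDerivAt_mul_exp_sub_div a c (ne_of_gt hy)).deriv
  rw [Function.iterate_succ_apply, Function.iterate_one, hderiv.deriv_eq,
    (hasDerivAt_exp_sub_div_mul_one_add_div a c (ne_of_gt hx)).deriv]
  have : 0 < x := hx
  positivity

theorem StrictConcaveOn.sum_mul {𝕜 E ι : Type*} [Field 𝕜] [LinearOrder 𝕜] [IsStrictOrderedRing 𝕜]
    [AddCommGroup E] [Module 𝕜 E] {s : Set E} {T : Finset ι} {w : ι → 𝕜} {F : ι → E → 𝕜}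
    {j : ι} (hj : j ∈ T) (hFj : StrictConcaveOn 𝕜 s (F j)) (hwj : 0 < w j)
    (hF : ∀ i ∈ T, ConcaveOn 𝕜 s (F i)) (hw : ∀ i ∈ T, 0 ≤ w i) :
    StrictConcaveOn 𝕜 s fun x => ∑ i ∈ T, w i * F i x := by
  refine ⟨hFj.1, fun x hx y hy hxy a b ha hb hab => ?_⟩
  simp only [smul_eq_mul, Finset.mul_sum, ← Finset.sum_add_distrib]
  have hcomb : ∀ i, a * (w i * F i x) + b * (w i * F i y) = w i * (a • F i x + b • F i y) :=
    fun i => by simp only [smul_eq_mul]; ring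
  refine Finset.sum_lt_sum (fun i hi => ?_) ⟨j, hj, ?_⟩
  · rw [hcomb]
    exact mul_le_mul_of_nonneg_left ((hF i hi).2 hx hy ha.le hb.le hab) (hw i hi)
  · rw [hcomb]
    exact mul_lt_mul_of_pos_left (hFj.2 hx hy hxy ha hb hab) hwj

/-- `payoff α μ t (τ * ν)` is `f_ν(t; ·)`. -/
noncomputable def payoff (α μ t c ℓ : ℝ) : ℝ :=
  ℓ * (1 - exp (-(α * μ / ℓ) * (t - ℓ / μ - c)))

section payoff

variable {α μ t c ℓ : ℝ}

theorem payoff_eq_sub_mul_exp (hμ : μ ≠ 0) (hℓ : ℓ ≠ 0) :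
    payoff α μ t c ℓ = ℓ - ℓ * exp (α - α * μ * (t - c) / ℓ) := by
  rw [payoff, mul_sub, mul_one]
  congr 3
  field_simp
  ring

theorem payoff_nonneg (hα : 0 ≤ α) (hμ : 0 < μ) (hℓ : 0 ≤ ℓ) (h : ℓ ≤ μ * (t - c)) :
    0 ≤ payoff α μ t c ℓ := by
  have hgap : 0 ≤ t - ℓ / μ - c := by
    have : ℓ / μ ≤ t - c := by rw [div_le_iff₀ hμ]; linarith
    linarith
  have hexp : exp (-(α * μ / ℓ) * (t - ℓ / μ - c)) ≤ 1 := by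
    rw [exp_le_one_iff, neg_mul, neg_nonpos]
    exact mul_nonneg (div_nonneg (mul_nonneg hα hμ.le) hℓ) hgap
  exact mul_nonneg hℓ (sub_nonneg.2 hexp)

theorem payoff_nonpos (hα : 0 ≤ α) (hμ : 0 < μ) (hℓ : 0 ≤ ℓ) (h : μ * (t - c) ≤ ℓ) :
    payoff α μ t c ℓ ≤ 0 := by
  have hgap : t - ℓ / μ - c ≤ 0 := by
    have : t - c ≤ ℓ / μ := by rw [le_div_iff₀ hμ]; linarith
    linarith
  have hexp : 1 ≤ exp (-(α * μ / ℓ) * (t - ℓ / μ - c)) := by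
    rw [one_le_exp_iff]
    exact mul_nonneg_of_nonpos_of_nonpos
      (neg_nonpos.2 (div_nonneg (mul_nonneg hα hμ.le) hℓ)) hgap
  exact mul_nonpos_of_nonneg_of_nonpos hℓ (sub_nonpos.2 hexp)

theorem strictConcaveOn_payoff (hα : α ≠ 0) (hμ : μ ≠ 0) (hc : c ≠ t) :
    StrictConcaveOn ℝ (Ioi 0) (payoff α μ t c) := by
  have hconv := strictConvexOn_mul_exp_sub_div α
    (mul_ne_zero (mul_ne_zero hα hμ) (sub_ne_zero.2 hc.symm))
  refine (concaveOn_id (convex_Ioi 0)).sub_strictConvexOn hconv |>.congr fun ℓ hℓ => ?_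
  exact (payoff_eq_sub_mul_exp hμ (ne_of_gt hℓ)).symm

end payoff

theorem tsum_mul_max_zero_payoff_eq_sum {α μ τ t ℓ : ℝ} (w : ℕ → ℝ) (hα : 0 ≤ α) (hμ : 0 < μ)
    (hτ : 0 ≤ τ) (hℓ : 0 ≤ ℓ) {ν : ℕ} (hlo : μ * (t - τ * (ν + 1)) ≤ ℓ) (hhi : ℓ ≤ μ * (t - τ * ν)) :
    ∑' n : ℕ, (if 2 ≤ n then w n * max 0 (payoff α μ t (τ * n) ℓ) else 0) =
      ∑ n ∈ Finset.Icc 2 ν, w n * payoff α μ t (τ * n) ℓ := by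
  rw [tsum_eq_sum (s := Finset.Icc 2 ν) fun n hn => ?_]
  · refine Finset.sum_congr rfl fun n hn => ?_
    obtain ⟨h2n, hnν⟩ := Finset.mem_Icc.1 hn
    have hle : ℓ ≤ μ * (t - τ * n) := hhi.trans <| by gcongr
    rw [if_pos h2n, max_eq_right (payoff_nonneg hα hμ hℓ hle)]
  · split_ifs with h2n
    · have hνn : ν < n := by
        simp only [Finset.mem_Icc, not_and, not_le] at hn
        exact hn h2n
      replace hνn : (ν : ℝ) + 1 ≤ n := by exact_mod_cast hνn
      have hge : μ * (t - τ * n) ≤ ℓ := (by gcongr : μ * (t - τ * n) ≤ _).trans hlo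
      rw [max_eq_left (payoff_nonpos hα hμ hℓ hge), mul_zero]
    · rfl

theorem expected_return_piecewise_concave_general
    (α μ τ p t : ℝ) (hα : 0 < α) (hμ : 0 < μ) (hτ : 0 < τ)
    (hp0 : 0 ≤ p) (hp1 : p < 1)
    (f : ℕ → ℝ → ℝ)
    (hf : ∀ (ν : ℕ) (ℓ : ℝ),
      f ν ℓ = ℓ * (1 - Real.exp (-(α * μ / ℓ) * (t - ℓ / μ - τ * ν))))
    (h : ℕ → ℝ) (hh : ∀ ν : ℕ, h ν = ((ν : ℝ) - 1) * (1 - p) ^ 2 * p ^ (ν - 2))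
    (E : ℝ → ℝ)
    (hE : ∀ ℓ : ℝ, E ℓ = ∑' ν' : ℕ, if 2 ≤ ν' then h ν' * max 0 (f ν' ℓ) else 0) :
    ∀ ν : ℕ, 2 ≤ ν → 0 < μ * (t - τ * ν) →
      (∀ ℓ ∈ Set.Ioo (max 0 (μ * (t - τ * (ν + 1)))) (μ * (t - τ * ν)),
        E ℓ = ∑ ν' ∈ Finset.Icc 2 ν, h ν' * f ν' ℓ) ∧
      StrictConcaveOn ℝ
        (Set.Ioo (max 0 (μ * (t - τ * (ν + 1)))) (μ * (t - τ * ν))) E := by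
  intro ν hν hpos
  set I := Ioo (max 0 (μ * (t - τ * (ν + 1)))) (μ * (t - τ * ν))
  obtain rfl : f = fun n : ℕ => payoff α μ t (τ * n) := funext fun n => funext (hf n)
  have hνt : τ * ν < t := sub_pos.1 (pos_of_mul_pos_right hpos hμ.le)
  have hI : I ⊆ Ioi 0 := fun ℓ hℓ => (le_max_left _ _).trans_lt hℓ.1
  have hE_eq : ∀ ℓ ∈ I, E ℓ = ∑ n ∈ Finset.Icc 2 ν, h n * payoff α μ t (τ * n) ℓ := by
    intro ℓ hℓ
    rw [hE]
    exact tsum_mul_max_zero_payoff_eq_sum h hα.le hμ hτ.le (hI hℓ).le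
      ((le_max_right _ _).trans hℓ.1.le) hℓ.2.le
  have hconc : ∀ n ∈ Finset.Icc 2 ν, StrictConcaveOn ℝ I (payoff α μ t (τ * n)) := fun n hn => by
    have hnν : τ * n ≤ τ * ν := by gcongr; exact (Finset.mem_Icc.1 hn).2
    exact (strictConcaveOn_payoff hα.ne' hμ.ne' (hnν.trans_lt hνt).ne).subset hI (convex_Ioo _ _)
  have hw : ∀ n ∈ Finset.Icc 2 ν, 0 ≤ h n := fun n hn => by
    have : (1 : ℝ) ≤ n := by exact_mod_cast (Finset.mem_Icc.1 hn).1.trans' one_le_two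
    rw [hh]
    exact mul_nonneg (mul_nonneg (sub_nonneg.2 this) (sq_nonneg _)) (pow_nonneg hp0 _)
  have hw2 : 0 < h 2 := by
    have : 0 < 1 - p := sub_pos.2 hp1
    rw [hh]; norm_num; positivity
  refine ⟨hE_eq, StrictConcaveOn.congr ?_ fun ℓ hℓ => (hE_eq ℓ hℓ).symm⟩
  have h2 : 2 ∈ Finset.Icc 2 ν := Finset.mem_Icc.2 ⟨le_rfl, hν⟩
  exact .sum_mul h2 (hconc 2 h2) hw2
    (fun n hn => (hconc n hn).concaveOn) hw

/-- Fix `α, μ, τ > 0`, `p ∈ [0,1)`, and `t > 0`. With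
`f ν ℓ = ℓ * (1 - exp (-(α*μ/ℓ) * (t - ℓ/μ - τ*ν)))`, `h ν = (ν-1) * (1-p)^2 * p^(ν-2)` and the
expected-return function `E ℓ = Σ'_{ν' ≥ 2} h ν' * max 0 (f ν' ℓ)`, for each integer `ν ≥ 2`
with `μ * (t - τ*ν) > 0`, on the open interval
`I_ν = (max 0 (μ * (t - τ*(ν+1))), μ * (t - τ*ν))` the function `E` coincides with the finite
sum `Σ_{ν'=2}^{ν} h ν' * f ν' ℓ` and is strictly concave on `I_ν`; hence `E` is piece-wise
concave in `ℓ` with intervals of concavity delimited by the points `μ * (t - τ*ν)`. -/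
theorem expected_return_piecewise_concave
    (α μ τ p t : ℝ) (hα : 0 < α) (hμ : 0 < μ) (hτ : 0 < τ)
    (hp0 : 0 ≤ p) (hp1 : p < 1) (ht : 0 < t)
    (f : ℕ → ℝ → ℝ)
    (hf : ∀ (ν : ℕ) (ℓ : ℝ),
      f ν ℓ = ℓ * (1 - Real.exp (-(α * μ / ℓ) * (t - ℓ / μ - τ * ν))))
    (h : ℕ → ℝ) (hh : ∀ ν : ℕ, h ν = ((ν : ℝ) - 1) * (1 - p) ^ 2 * p ^ (ν - 2))
    (E : ℝ → ℝ)
    (hE : ∀ ℓ : ℝ, E ℓ = ∑' ν' : ℕ, if 2 ≤ ν' then h ν' * max 0 (f ν' ℓ) else 0) :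
    ∀ ν : ℕ, 2 ≤ ν → 0 < μ * (t - τ * ν) →
      (∀ ℓ ∈ Set.Ioo (max 0 (μ * (t - τ * (ν + 1)))) (μ * (t - τ * ν)),
        E ℓ = ∑ ν' ∈ Finset.Icc 2 ν, h ν' * f ν' ℓ) ∧
      StrictConcaveOn ℝ
        (Set.Ioo (max 0 (μ * (t - τ * (ν + 1)))) (μ * (t - τ * ν))) E :=
  expected_return_piecewise_concave_general α μ τ p t hα hμ hτ hp0 hp1 f hf h hh E hE
end

section
/- Fix parameters α > 0, μ > 0, τ > 0 and a maximum load ℓ_max > 0. Let w be the unique positive solution of (1 + w)e^{−w} = e^{−α}, set s = αμ/w, s̃ = s(1 − exp(−α(μ/s − 1))), and ζ = ℓ_max/s + 2τ. Define G(t, ℓ) = max(0, ℓ(1 − exp(−(αμ/ℓ)(t − ℓ/μ − 2τ)))) for ℓ > 0 and G(t, 0) = 0. Then the optimized expected return satisfies: sup_{ℓ ∈ [0, ℓ_max]} G(t, ℓ) = 0 if t ≤ 2τ; = s̃(t − 2τ) if 2τ < t ≤ ζ; and = ℓ_max(1 − exp(−(αμ/ℓ_max)(t − ℓ_max/μ −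 2τ))) if t > ζ. -/
/-!
Put `T = t - 2τ` and `c = αμT`. For `ℓ > 0` the exponent equals `α - c/ℓ`, so
`G t ℓ = max 0 (ℓ (1 - e^{α - c/ℓ}))`. The defining equation of `w` reads `(1 + w) e^{α - w} = 1`,
and with it `e^y ≥ 1 + y` at `y = w - x` gives `(1 + w)(1 - e^{α - x}) ≤ x`; hence
`ℓ (1 - e^{α - c/ℓ}) ≤ c / (1 + w) = s̃ T`, with equality at `ℓ = c/w = sT`. This settles
`t ≤ 2τ` (then `c ≤ 0`) and `2τ < t ≤ ζ` (then `sT ≤ ℓ_max`). For `t > ζ` the unconstrained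
maximizer `sT` lies beyond `ℓ_max`, and `ℓ ↦ ℓ (1 - e^{α - c/ℓ})` is increasing on `(0, c/w]`
because `(1 + x) e^{α - x} ≤ 1` for `x ≥ w`, so the supremum is attained at `ℓ_max`.
-/

open Real Set

noncomputable def awgnReturn (α c ℓ : ℝ) : ℝ := ℓ * (1 - exp (α - c / ℓ))

section

variable {α w : ℝ}

lemma one_add_pos_of_one_add_mul_exp_sub_eq_one (hw1 : (1 + w) * exp (α - w) = 1) :
    0 < 1 + w :=
  pos_of_mul_pos_left (hw1 ▸ one_pos) (exp_pos _).le

lemma lt_of_one_add_mul_exp_sub_eq_one (hw : 0 < w) (hw1 : (1 + w) * exp (α - w) = 1) :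
    α < w := by
  have : exp (α - w) < 1 := by nlinarith [mul_pos hw (exp_pos (α - w))]
  linarith [exp_lt_one_iff.mp this]

lemma one_sub_exp_sub_eq_div (hw1 : (1 + w) * exp (α - w) = 1) :
    1 - exp (α - w) = w / (1 + w) := by
  have := (one_add_pos_of_one_add_mul_exp_sub_eq_one hw1).ne'
  field_simp
  linarith

lemma one_add_mul_one_sub_exp_sub_le (hw1 : (1 + w) * exp (α - w) = 1) (x : ℝ) :
    (1 + w) * (1 - exp (α - x)) ≤ x := by
  have hsplit : (1 + w) * exp (α - x) = exp (w - x) := by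
    rw [show α - x = (α - w) + (w - x) by ring, exp_add, ← mul_assoc, hw1, one_mul]
  linarith [add_one_le_exp (w - x)]

lemma one_add_mul_exp_sub_le_one (hw : 0 ≤ w) (hw1 : (1 + w) * exp (α - w) = 1) {x : ℝ}
    (hx : w ≤ x) : (1 + x) * exp (α - x) ≤ 1 := by
  have hgrowth : 1 + x ≤ (1 + w) * exp (x - w) := by
    nlinarith [add_one_le_exp (x - w), mul_nonneg hw (sub_nonneg.2 hx)]
  calc (1 + x) * exp (α - x) ≤ (1 + w) * exp (x - w) * exp (α - x) := by gcongr
    _ = 1 := by rw [mul_assoc, ← exp_add, show x - w + (α - x) = α - w by ring, hw1]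

lemma awgnReturn_le (hw1 : (1 + w) * exp (α - w) = 1) (c : ℝ) {ℓ : ℝ} (hℓ : 0 < ℓ) :
    awgnReturn α c ℓ ≤ c / (1 + w) := by
  rw [le_div_iff₀ (one_add_pos_of_one_add_mul_exp_sub_eq_one hw1)]
  calc awgnReturn α c ℓ * (1 + w) = ℓ * ((1 + w) * (1 - exp (α - c / ℓ))) := by
        rw [awgnReturn]; ring
    _ ≤ ℓ * (c / ℓ) := by gcongr; exact one_add_mul_one_sub_exp_sub_le hw1 _
    _ = c := mul_div_cancel₀ c hℓ.ne'

lemma awgnReturn_div (hw : w ≠ 0) (hw1 : (1 + w) * exp (α - w) = 1) {c : ℝ} (hc : c ≠ 0) :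
    awgnReturn α c (c / w) = c / (1 + w) := by
  have := (one_add_pos_of_one_add_mul_exp_sub_eq_one hw1).ne'
  rw [awgnReturn, div_div_cancel₀ hc, one_sub_exp_sub_eq_div hw1]
  field_simp

lemma monotoneOn_awgnReturn (hw : 0 < w) (hw1 : (1 + w) * exp (α - w) = 1) (c : ℝ) :
    MonotoneOn (awgnReturn α c) (Ioc 0 (c / w)) := by
  rintro ℓ ⟨hℓ, -⟩ m ⟨hm, hmc⟩ hℓm
  set a := c / m
  set b := c / ℓ
  have ha : w ≤ a := (le_div_iff₀ hm).2 (by rwa [le_div_iff₀' hw] at hmc)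
  have hab : ℓ * b = m * a := by
    rw [mul_div_cancel₀ c hℓ.ne', mul_div_cancel₀ c hm.ne']
  -- tangent line of `exp` at `α - a`, evaluated at `α - b`
  have htangent : exp (α - a) * (1 + a - b) ≤ exp (α - b) := by
    rw [show α - b = (α - a) + (a - b) by ring, exp_add]
    nlinarith [add_one_le_exp (a - b), exp_pos (α - a)]
  have hX : 0 ≤ ℓ * (exp (α - b) - exp (α - a) * (1 + a - b)) :=
    mul_nonneg hℓ.le (sub_nonneg.2 htangent)
  have hY : 0 ≤ (m - ℓ) * (1 - (1 + a) * exp (α - a)) :=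
    mul_nonneg (sub_nonneg.2 hℓm) (sub_nonneg.2 (one_add_mul_exp_sub_le_one hw.le hw1 ha))
  have hab' : ℓ * b * exp (α - a) = m * a * exp (α - a) := by rw [hab]
  change ℓ * (1 - exp (α - b)) ≤ m * (1 - exp (α - a))
  linarith

end

lemma csSup_image_Icc_eq_of_max_zero {g F : ℝ → ℝ} {a b M : ℝ} (hg0 : g 0 = 0)
    (hg : ∀ ℓ, 0 < ℓ → g ℓ = max 0 (F ℓ)) (hM : 0 ≤ M) (hF : ∀ ℓ ∈ Ioc 0 a, F ℓ ≤ M)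
    (hb : b ∈ Icc 0 a) (hgb : g b = M) : sSup (g '' Icc 0 a) = M := by
  refine IsGreatest.csSup_eq ⟨hgb ▸ mem_image_of_mem g hb, ?_⟩
  rintro _ ⟨ℓ, ⟨hℓ0, hℓa⟩, rfl⟩
  rcases hℓ0.eq_or_lt with rfl | hℓ
  · rwa [hg0]
  · rw [hg ℓ hℓ]
    exact max_le hM (hF ℓ ⟨hℓ, hℓa⟩)

theorem awgn_optimized_expected_return_closed_form_general
    (α μ τ ℓmax : ℝ) (hα : 0 < α) (hμ : 0 < μ) (hℓmax : 0 < ℓmax)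
    (w : ℝ) (hw : 0 < w) (hweq : (1 + w) * Real.exp (-w) = Real.exp (-α))
    (s stilde ζ : ℝ) (hs : s = α * μ / w)
    (hstilde : stilde = s * (1 - Real.exp (-α * (μ / s - 1))))
    (hζ : ζ = ℓmax / s + 2 * τ)
    (G : ℝ → ℝ → ℝ)
    (hG : ∀ t ℓ : ℝ, 0 < ℓ →
      G t ℓ = max 0 (ℓ * (1 - Real.exp (-(α * μ / ℓ) * (t - ℓ / μ - 2 * τ)))))
    (hG0 : ∀ t : ℝ, G t 0 = 0) :
    ∀ t : ℝ,
      (t ≤ 2 * τ → sSup (G t '' Set.Icc (0 : ℝ) ℓmax) = 0) ∧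
      (2 * τ < t → t ≤ ζ → sSup (G t '' Set.Icc (0 : ℝ) ℓmax) = stilde * (t - 2 * τ)) ∧
      (ζ < t → sSup (G t '' Set.Icc (0 : ℝ) ℓmax)
          = ℓmax * (1 - Real.exp (-(α * μ / ℓmax) * (t - ℓmax / μ - 2 * τ)))) := by
  have hw1 : (1 + w) * exp (α - w) = 1 := by
    rw [sub_eq_add_neg, exp_add, mul_left_comm, hweq, ← exp_add, add_neg_cancel, exp_zero]
  have hs_pos : 0 < s := hs ▸ by positivity
  have hstilde' : stilde = α * μ / (1 + w) := by
    have := (one_add_pos_of_one_add_mul_exp_sub_eq_one hw1).ne'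
    rw [hstilde, show -α * (μ / s - 1) = α - w by rw [hs]; field_simp; ring,
      one_sub_exp_sub_eq_div hw1, hs]
    field_simp
  intro t
  set c := α * μ * (t - 2 * τ) with hc
  have hexp : ∀ ℓ ≠ 0, -(α * μ / ℓ) * (t - ℓ / μ - 2 * τ) = α - c / ℓ := fun ℓ hℓ => by
    field_simp
    ring
  have hGc : ∀ ℓ, 0 < ℓ → G t ℓ = max 0 (awgnReturn α c ℓ) := fun ℓ hℓ => by
    rw [hG t ℓ hℓ, hexp ℓ hℓ.ne', awgnReturn]
  have hcw : c / w = s * (t - 2 * τ) := by rw [hs]; ring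
  refine ⟨fun ht => ?_, fun ht₁ ht₂ => ?_, fun ht => ?_⟩
  · have hc0 : c ≤ 0 := mul_nonpos_of_nonneg_of_nonpos (by positivity) (by linarith)
    have hw1' := (one_add_pos_of_one_add_mul_exp_sub_eq_one hw1).le
    exact csSup_image_Icc_eq_of_max_zero (hG0 t) hGc le_rfl
      (fun ℓ hℓ => (awgnReturn_le hw1 c hℓ.1).trans (div_nonpos_of_nonpos_of_nonneg hc0 hw1'))
      ⟨le_rfl, hℓmax.le⟩ (hG0 t)
  · have hc_pos : 0 < c := by positivity
    have hmax : c / w ≤ ℓmax := by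
      rw [hcw, ← le_div_iff₀' hs_pos]
      linarith
    have hM : stilde * (t - 2 * τ) = c / (1 + w) := by rw [hstilde', hc]; ring
    rw [hM]
    refine csSup_image_Icc_eq_of_max_zero (hG0 t) hGc (by positivity)
      (fun ℓ hℓ => awgnReturn_le hw1 c hℓ.1) ⟨by positivity, hmax⟩ ?_
    rw [hGc _ (by positivity), awgnReturn_div hw.ne' hw1 hc_pos.ne', max_eq_right (by positivity)]
  · have hmax : ℓmax < c / w := by
      rw [hcw, ← div_lt_iff₀' hs_pos]
      linarith
    have hw_le : w ≤ c / ℓmax := by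
      rw [le_div_iff₀ hℓmax]
      exact (le_div_iff₀' hw).1 hmax.le
    have hM : 0 ≤ awgnReturn α c ℓmax :=
      mul_nonneg hℓmax.le <| sub_nonneg.2 <| exp_le_one_iff.2 <| by
        linarith [lt_of_one_add_mul_exp_sub_eq_one hw hw1]
    rw [hexp ℓmax hℓmax.ne']
    refine csSup_image_Icc_eq_of_max_zero (hG0 t) hGc hM (fun ℓ hℓ => ?_)
      ⟨hℓmax.le, le_rfl⟩ ((hGc ℓmax hℓmax).trans (max_eq_right hM))
    exact monotoneOn_awgnReturn hw hw1 c ⟨hℓ.1, hℓ.2.trans hmax.le⟩ ⟨hℓmax, hmax.le⟩ hℓ.2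

/-- Fix `α, μ, τ > 0` and `ℓ_max > 0`. Let `w` be the unique positive solution
of `(1 + w) * exp (-w) = exp (-α)`, `s = α*μ/w`, `s̃ = s * (1 - exp (-α * (μ/s - 1)))` and
`ζ = ℓ_max / s + 2τ`. With `G t ℓ = max 0 (ℓ * (1 - exp (-(α*μ/ℓ) * (t - ℓ/μ - 2τ))))` for
`ℓ > 0` and `G t 0 = 0`, the optimized expected return `sup_{ℓ ∈ [0, ℓ_max]} G t ℓ` equals `0`
if `t ≤ 2τ`, equals `s̃ * (t - 2τ)` if `2τ < t ≤ ζ`, and equals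
`ℓ_max * (1 - exp (-(α*μ/ℓ_max) * (t - ℓ_max/μ - 2τ)))` if `t > ζ`. -/
theorem awgn_optimized_expected_return_closed_form
    (α μ τ ℓmax : ℝ) (hα : 0 < α) (hμ : 0 < μ) (hτ : 0 < τ) (hℓmax : 0 < ℓmax)
    (w : ℝ) (hw : 0 < w) (hweq : (1 + w) * Real.exp (-w) = Real.exp (-α))
    (s stilde ζ : ℝ) (hs : s = α * μ / w)
    (hstilde : stilde = s * (1 - Real.exp (-α * (μ / s - 1))))
    (hζ : ζ = ℓmax / s + 2 * τ)
    (G : ℝ → ℝ → ℝ)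
    (hG : ∀ t ℓ : ℝ, 0 < ℓ →
      G t ℓ = max 0 (ℓ * (1 - Real.exp (-(α * μ / ℓ) * (t - ℓ / μ - 2 * τ)))))
    (hG0 : ∀ t : ℝ, G t 0 = 0) :
    ∀ t : ℝ,
      (t ≤ 2 * τ → sSup (G t '' Set.Icc (0 : ℝ) ℓmax) = 0) ∧
      (2 * τ < t → t ≤ ζ → sSup (G t '' Set.Icc (0 : ℝ) ℓmax) = stilde * (t - 2 * τ)) ∧
      (ζ < t → sSup (G t '' Set.Icc (0 : ℝ) ℓmax)
          = ℓmax * (1 - Real.exp (-(α * μ / ℓmax) * (t - ℓmax / μ - 2 * τ)))) :=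
  awgn_optimized_expected_return_closed_form_general α μ τ ℓmax hα hμ hℓmax w hw hweq s stilde ζ hs
    hstilde hζ G hG hG0
end
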